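/- arXiv:2604.17161 — 3 statements merged into one kernel-verified Lean document; each statement's English description precedes it below -/
import Mathlib

section
/- Let k be a field of characteristic zero and A_h = k[x][t; h(x)∂_x]. For every i ≥ 1 there exists u_i ∈ A_h such that [t^i, x] = i·h(x)·t^{i−1} + h(x)·u_i and deg_t(u_i) < i − 1, where deg_t denotes the degree in t (with deg_t(0) = −∞). -/
/-!
Moving `t` past a polynomial in `x` is the derivation `h(x)∂ₓ`:
`t·p(x) = p(x)·t + h(x)·p'(x)`. Hence `[t^{n+2}, x] = t·[t^{n+1}, x] + h(x)·t^{n+1}`, and if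
`[t^{n+1}, x] = (n+1)·h(x)·tⁿ + h(x)·u` then, using `t·h(x) = h(x)·t + h(x)·h'(x)`,
`[t^{n+2}, x] = (n+2)·h(x)·t^{n+1} + h(x)·((n+1)·h'(x)·tⁿ + t·u + h'(x)·u)`,
where the new correction term has `t`-degree below `n + 1` whenever `u` has `t`-degree below `n`.
-/

open Polynomial

section
variable {R A : Type*} [CommSemiring R] [Semiring A] [Algebra R A] {h : R[X]} {x t : A}

theorem mul_aeval_eq_of_mul_eq (hrel : t * x = x * t + aeval x h) (p : R[X]) :
    t * aeval x p = aeval x p * t + aeval x h * aeval x (derivative p) := by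
  induction p using Polynomial.induction_on with
  | C a => simp [Algebra.commutes]
  | add p q hp hq =>
    simp only [map_add, mul_add, add_mul, hp, hq]
    abel
  | monomial n a ih =>
    rw [pow_succ, ← mul_assoc]
    generalize C a * X ^ n = p at ih ⊢
    rw [derivative_mul, derivative_X, mul_one, map_add, map_mul, map_mul, aeval_X]
    calc t * (aeval x p * x) = (aeval x p * t + aeval x h * aeval x (derivative p)) * x := by
          rw [← mul_assoc, ih]
      _ = aeval x p * x * t + aeval x p * aeval x h + aeval x h * aeval x (derivative p) * x := by
          rw [add_mul, mul_assoc, hrel, mul_add, ← mul_assoc]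
      _ = aeval x p * x * t + aeval x h * (aeval x (derivative p) * x + aeval x p) := by
          rw [((Commute.all p h).map (aeval x)).eq, mul_add, mul_assoc, add_assoc,
            add_comm (aeval x h * aeval x p), mul_assoc]

variable (R) in
/-- Elements admitting a representation `∑_{j<n} g_j(x)·tʲ`, i.e. of `t`-degree `< n`. -/
def tDegreeLT (x t : A) (n : ℕ) : AddSubmonoid A where
  carrier := {u | ∃ g : ℕ → R[X], u = ∑ j ∈ Finset.range n, aeval x (g j) * t ^ j}
  add_mem' := by
    rintro _ _ ⟨f, rfl⟩ ⟨g, rfl⟩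
    exact ⟨f + g, by simp [add_mul, Finset.sum_add_distrib]⟩
  zero_mem' := ⟨0, by simp⟩

theorem mem_tDegreeLT {n : ℕ} {u : A} :
    u ∈ tDegreeLT R x t n ↔ ∃ g : ℕ → R[X], u = ∑ j ∈ Finset.range n, aeval x (g j) * t ^ j :=
  Iff.rfl

theorem aeval_mul_pow_mem_tDegreeLT (p : R[X]) {j n : ℕ} (hj : j < n) :
    aeval x p * t ^ j ∈ tDegreeLT R x t n := by
  classical
  refine mem_tDegreeLT.2 ⟨Pi.single j p, ?_⟩
  rw [Finset.sum_eq_single_of_mem j (Finset.mem_range.2 hj) fun i _ hi => by simp [hi]]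
  simp

theorem tDegreeLT_mono : Monotone (tDegreeLT R x t) :=
  monotone_nat_of_le_succ fun n u hu => by
    obtain ⟨g, rfl⟩ := mem_tDegreeLT.1 hu
    exact sum_mem fun j hj =>
      aeval_mul_pow_mem_tDegreeLT _ (Nat.lt_succ_of_lt (Finset.mem_range.1 hj))

theorem aeval_mul_mem_tDegreeLT (p : R[X]) {n : ℕ} {u : A} (hu : u ∈ tDegreeLT R x t n) :
    aeval x p * u ∈ tDegreeLT R x t n := by
  obtain ⟨g, rfl⟩ := mem_tDegreeLT.1 hu
  exact mem_tDegreeLT.2 ⟨fun j => p * g j, by simp [Finset.mul_sum, mul_assoc]⟩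

theorem mul_mem_tDegreeLT_succ (hrel : t * x = x * t + aeval x h) {n : ℕ} {u : A}
    (hu : u ∈ tDegreeLT R x t n) : t * u ∈ tDegreeLT R x t (n + 1) := by
  obtain ⟨g, rfl⟩ := mem_tDegreeLT.1 hu
  rw [Finset.mul_sum]
  refine sum_mem fun j hj => ?_
  have hj := Finset.mem_range.1 hj
  have hterm : t * (aeval x (g j) * t ^ j) =
      aeval x (g j) * t ^ (j + 1) + aeval x (h * derivative (g j)) * t ^ j := by
    rw [← mul_assoc, mul_aeval_eq_of_mul_eq hrel, add_mul, mul_assoc, ← pow_succ', map_mul,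
      mul_assoc]
  rw [hterm]
  exact add_mem (aeval_mul_pow_mem_tDegreeLT _ (by omega))
    (aeval_mul_pow_mem_tDegreeLT _ (by omega))

end

section
variable {R A : Type*} [CommSemiring R] [Ring A] [Algebra R A] {h : R[X]} {x t : A}

theorem commutator_pow_succ_succ (hrel : t * x = x * t + aeval x h) {n : ℕ} {u : A}
    (hu : t ^ (n + 1) * x - x * t ^ (n + 1) =
      ((n + 1 : ℕ) : A) * aeval x h * t ^ n + aeval x h * u) :
    t ^ (n + 2) * x - x * t ^ (n + 2) = ((n + 2 : ℕ) : A) * aeval x h * t ^ (n + 1) +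
      aeval x h * (((n + 1 : ℕ) : A) * aeval x (derivative h) * t ^ n + t * u +
        aeval x (derivative h) * u) := by
  have htH := mul_aeval_eq_of_mul_eq hrel h
  calc t ^ (n + 2) * x - x * t ^ (n + 2)
      = t * (t ^ (n + 1) * x - x * t ^ (n + 1)) + (t * x - x * t) * t ^ (n + 1) := by
        rw [pow_succ' t (n + 1)]; noncomm_ring
    _ = t * (((n + 1 : ℕ) : A) * aeval x h * t ^ n + aeval x h * u) +
          aeval x h * t ^ (n + 1) := by
        rw [hu, hrel, add_sub_cancel_left]
    _ = _ := by
        rw [pow_succ' t n, mul_add, ← mul_assoc t, ← mul_assoc t, ← (Nat.cast_commute _ t).eq,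
          mul_assoc _ t, htH, ← mul_assoc t, htH]
        simp only [← nsmul_eq_mul, mul_add, add_mul, mul_smul_comm, smul_mul_assoc, mul_assoc]
        module

theorem exists_commutator_pow_succ_eq (hrel : t * x = x * t + aeval x h) (n : ℕ) :
    ∃ u ∈ tDegreeLT R x t n, t ^ (n + 1) * x - x * t ^ (n + 1) =
      ((n + 1 : ℕ) : A) * aeval x h * t ^ n + aeval x h * u := by
  induction n with
  | zero => exact ⟨0, zero_mem _, by simp [hrel]⟩
  | succ n ih =>
    obtain ⟨u, hu, hcomm⟩ := ih
    refine ⟨_, ?_, commutator_pow_succ_succ hrel hcomm⟩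
    refine add_mem (add_mem ?_ (mul_mem_tDegreeLT_succ hrel hu))
      (tDegreeLT_mono n.le_succ (aeval_mul_mem_tDegreeLT _ hu))
    simpa [mul_assoc] using aeval_mul_pow_mem_tDegreeLT (x := x) (t := t)
      (((n + 1 : ℕ) : R[X]) * derivative h) n.lt_succ_self

end

theorem stmt5_general (k : Type*) [Field k] (h : k[X])
    (A : Type*) [Ring A] [Algebra k A] (x t : A)
    (hrel : t * x = x * t + aeval x h) :
    ∀ i : ℕ, 1 ≤ i → ∃ u : A,
      t ^ i * x - x * t ^ i = (i : A) * aeval x h * t ^ (i - 1) + aeval x h * u ∧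
      ∃ g : ℕ → k[X], u = ∑ j ∈ Finset.range (i - 1), aeval x (g j) * t ^ j := by
  intro i hi
  obtain ⟨n, rfl⟩ := Nat.exists_eq_add_of_le' hi
  obtain ⟨u, hu, hcomm⟩ := exists_commutator_pow_succ_eq hrel n
  exact ⟨u, by simpa using hcomm, by simpa using mem_tDegreeLT.1 hu⟩

/-- In `A_h`, for every `i ≥ 1` there is `u_i` with
`[tⁱ, x] = i·h(x)·t^{i-1} + h(x)·u_i` and `deg_t(u_i) < i - 1`
(`u_i` is a sum of terms `g_j(x)·tʲ` with `j < i - 1`). -/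
theorem stmt5 (k : Type*) [Field k] [CharZero k] (h : k[X])
    (A : Type*) [Ring A] [Algebra k A] (x t : A)
    (hrel : t * x = x * t + aeval x h) :
    ∀ i : ℕ, 1 ≤ i → ∃ u : A,
      t ^ i * x - x * t ^ i = (i : A) * aeval x h * t ^ (i - 1) + aeval x h * u ∧
      ∃ g : ℕ → k[X], u = ∑ j ∈ Finset.range (i - 1), aeval x (g j) * t ^ j :=
  stmt5_general k h A x t hrel
end

section
/- Let k be a field of characteristic zero, h ∈ k[x] with deg h = N ≥ 1. For a ∈ k* and r ∈ k[x], let σ_r and τ_a be the automorphisms of A_h = k[x][t; h(x)∂_x] determined by σ_r(x)=x, σ_r(t)=t+r(x), τ_a(x)=a·x, τ_a(t)=a^{N−1}·t (assuming h(a·x)=a^N h(x)). Then τ_a ∘ σ_r = σ_{a^{1−N}·r(a·x)} ∘ τ_a. -/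
/-!
Both sides are algebra automorphisms, so it suffices to compare them on the generators `x` and
`t`. On `t`, the factor `a^(N-1)` that `τ_a` puts in front of `t` also multiplies the shift
`a^(1-N)·r(a·x)` of the right-hand side and cancels its scalar, while `τ_a` turns `r(x)` into
`r(a·x)`.
-/

open Polynomial

theorem AlgEquiv.ext_of_adjoin_pair_eq_top {R A B : Type*} [CommSemiring R] [Semiring A]
    [Semiring B] [Algebra R A] [Algebra R B] {x t : A} (hgen : Algebra.adjoin R {x, t} = ⊤)
    {f g : A ≃ₐ[R] B} (hx : f x = g x) (ht : f t = g t) : f = g := by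
  have hfg : (f : A →ₐ[R] B) = g := by
    refine AlgHom.ext_of_adjoin_eq_top hgen ?_
    rintro y (rfl | rfl)
    exacts [hx, ht]
  exact AlgEquiv.coe_toAlgHom_injective hfg

theorem pow_sub_one_mul_zpow_one_sub {G : Type*} [GroupWithZero G] {a : G} (ha : a ≠ 0)
    {N : ℕ} (hN : 1 ≤ N) : a ^ (N - 1) * a ^ (1 - (N : ℤ)) = 1 := by
  rw [← zpow_natCast, ← zpow_add₀ ha, Nat.cast_sub hN]
  simp

theorem Polynomial.aeval_comp_C_mul_X {R A : Type*} [CommSemiring R] [Semiring A] [Algebra R A]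
    (x : A) (a : R) (p : R[X]) :
    aeval x (p.comp (C a * X)) = aeval (algebraMap R A a * x) p := by
  simp [aeval_comp]

theorem stmt14_general (k : Type*) [Field k] (N : ℕ) (hN : 1 ≤ N)
    (A : Type*) [Ring A] [Algebra k A] (x t : A)
    (hgen : Algebra.adjoin k {x, t} = ⊤)
    (a : k) (ha : a ≠ 0)
    (r : k[X]) (σr τa σr' : A ≃ₐ[k] A)
    (hσx : σr x = x) (hσt : σr t = t + aeval x r)
    (hτx : τa x = algebraMap k A a * x)
    (hτt : τa t = algebraMap k A (a ^ (N - 1)) * t)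
    (hσ'x : σr' x = x)
    (hσ't : σr' t = t + aeval x ((a ^ (1 - (N : ℤ))) • r.comp (C a * X))) :
    σr.trans τa = τa.trans σr' := by
  refine AlgEquiv.ext_of_adjoin_pair_eq_top hgen ?_ ?_
  · change τa (σr x) = σr' (τa x)
    rw [hσx, hτx, map_mul, AlgEquiv.commutes, hσ'x]
  · change τa (σr t) = σr' (τa t)
    calc τa (σr t) = algebraMap k A (a ^ (N - 1)) * t + aeval (algebraMap k A a * x) r := by
          rw [hσt, map_add, hτt, ← hτx, aeval_algHom_apply]
      _ = algebraMap k A (a ^ (N - 1)) *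
            (t + aeval x ((a ^ (1 - (N : ℤ))) • r.comp (C a * X))) := by
          rw [map_smul, aeval_comp_C_mul_X, Algebra.smul_def, mul_add, ← mul_assoc, ← map_mul,
            pow_sub_one_mul_zpow_one_sub ha hN, map_one, one_mul]
      _ = σr' (τa t) := by
          rw [hτt, map_mul, AlgEquiv.commutes, hσ't]

/-- In `Aut(A_h)` (with `deg h = N ≥ 1`, `h(a·x) = a^N·h(x)`), one has
`τ_a ∘ σ_r = σ_{a^{1-N}·r(a·x)} ∘ τ_a`. -/
theorem stmt14 (k : Type*) [Field k] [CharZero k] (h : k[X]) (N : ℕ) (hN : 1 ≤ N)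
    (hdeg : h.natDegree = N)
    (A : Type*) [Ring A] [Algebra k A] (x t : A)
    (hrel : t * x = x * t + aeval x h)
    (hgen : Algebra.adjoin k {x, t} = ⊤)
    (a : k) (ha : a ≠ 0) (hcond : h.comp (C a * X) = C (a ^ N) * h)
    (r : k[X]) (σr τa σr' : A ≃ₐ[k] A)
    (hσx : σr x = x) (hσt : σr t = t + aeval x r)
    (hτx : τa x = algebraMap k A a * x)
    (hτt : τa t = algebraMap k A (a ^ (N - 1)) * t)
    (hσ'x : σr' x = x)
    (hσ't : σr' t = t + aeval x ((a ^ (1 - (N : ℤ))) • r.comp (C a * X))) :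
    σr.trans τa = τa.trans σr' :=
  stmt14_general k N hN A x t hgen a ha r σr τa σr' hσx hσt hτx hτt hσ'x hσ't
end

section
/- Let k be a field of characteristic zero, h ∈ k[x] with deg h = N ≥ 1, and p ∈ k[x] with deg p ≥ N. Write p = p₁·h + p₂ by division with remainder, deg p₂ < N. Then in A_h = k[x][t; h(x)∂_x], the derivation D_p (defined by D_p(x)=0, D_p(t)=p(x)) decomposes as D_p = ad_w + Δ_{p₂}, where w ∈ k[x] is any polynomial with w' = −p₁, ad_w(b) = w·b − b·w, and Δ_{p₂} is the derivation with Δ(x)=0, Δ(t)=p₂(x). -/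
open Polynomial

/-! Both sides are `k`-linear maps satisfying the Leibniz rule, so they agree as soon as they
agree on the generators `x` and `t`. On `x` both vanish, since `w(x)` commutes with `x`. On `t`,
the relation `t x = x t + h(x)` makes `q(x) ↦ [t, q(x)]` act as `h(x) ∂_x` on `k[x]`, so
`[w(x), t] = -w'(x) h(x) = p₁(x) h(x)`, and `p = p₁ h + p₂` finishes. -/

theorem mul_aeval_eq_aeval_mul_add_of_mul_eq {R A : Type*} [CommSemiring R] [Semiring A]
    [Algebra R A] {x t : A} {h : R[X]} (hrel : t * x = x * t + aeval x h) (q : R[X]) :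
    t * aeval x q = aeval x q * t + aeval x (derivative q * h) := by
  have hxh : aeval x h * x = x * aeval x h := by
    simpa using ((commute_X h).map (aeval x)).eq.symm
  have step : ∀ f : R[X], t * aeval x f = aeval x f * t + aeval x (derivative f * h) →
      t * aeval x (f * X) = aeval x (f * X) * t + aeval x (derivative (f * X) * h) := by
    intro f hf
    rw [map_mul, aeval_X, ← mul_assoc, hf]
    simp only [derivative_mul, derivative_X, mul_one, add_mul, mul_add, map_add, map_mul,
      aeval_X, mul_assoc, hrel, hxh]
    abel
  induction q using Polynomial.induction_on with
  | C a => simp [Algebra.commutes]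
  | add f g hf hg =>
    simp only [map_add, mul_add, add_mul, hf, hg]
    abel
  | monomial n a ih => simpa only [pow_succ, mul_assoc] using step _ ih

section Leibniz

variable {k A : Type*} [CommRing k] [Ring A] [Algebra k A]

theorem map_one_eq_zero_of_leibniz {D : A →ₗ[k] A}
    (hD : ∀ a b : A, D (a * b) = a * D b + D a * b) : D 1 = 0 := by
  have h := hD 1 1
  simp only [one_mul, mul_one, left_eq_add] at h
  exact h

theorem leibniz_mulLeft_sub_mulRight_add {Δ : A →ₗ[k] A}
    (hΔ : ∀ a b : A, Δ (a * b) = a * Δ b + Δ a * b) (c : A) (a b : A) :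
    (LinearMap.mulLeft k c - LinearMap.mulRight k c + Δ) (a * b)
      = a * (LinearMap.mulLeft k c - LinearMap.mulRight k c + Δ) b
        + (LinearMap.mulLeft k c - LinearMap.mulRight k c + Δ) a * b := by
  simp only [LinearMap.add_apply, LinearMap.sub_apply, LinearMap.mulLeft_apply,
    LinearMap.mulRight_apply, hΔ]
  noncomm_ring

theorem eq_of_leibniz_of_eqOn_of_adjoin_eq_top {D₁ D₂ : A →ₗ[k] A}
    (hD₁ : ∀ a b : A, D₁ (a * b) = a * D₁ b + D₁ a * b)
    (hD₂ : ∀ a b : A, D₂ (a * b) = a * D₂ b + D₂ a * b)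
    {s : Set A} (hs : Algebra.adjoin k s = ⊤) (heq : Set.EqOn D₁ D₂ s) : D₁ = D₂ := by
  ext b
  induction (hs ▸ Algebra.mem_top : b ∈ Algebra.adjoin k s) using Algebra.adjoin_induction with
  | mem y hy => exact heq hy
  | algebraMap r =>
    rw [Algebra.algebraMap_eq_smul_one, map_smul, map_smul, map_one_eq_zero_of_leibniz hD₁,
      map_one_eq_zero_of_leibniz hD₂]
  | add y z _ _ hy hz => rw [map_add, map_add, hy, hz]
  | mul y z _ _ hy hz => rw [hD₁, hD₂, hy, hz]

end Leibniz

theorem stmt18_general (k : Type*) [Field k] (h : k[X])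
    (A : Type*) [Ring A] [Algebra k A] (x t : A)
    (hrel : t * x = x * t + aeval x h)
    (hgen : Algebra.adjoin k {x, t} = ⊤)
    (p p₁ p₂ : k[X]) (hdiv : p = p₁ * h + p₂)
    (w : k[X]) (hw : derivative w = -p₁)
    (Dp Δ : A →ₗ[k] A)
    (hDpleib : ∀ a b : A, Dp (a * b) = a * Dp b + Dp a * b)
    (hΔleib : ∀ a b : A, Δ (a * b) = a * Δ b + Δ a * b)
    (hDpx : Dp x = 0) (hDpt : Dp t = aeval x p)
    (hΔx : Δ x = 0) (hΔt : Δ t = aeval x p₂) :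
    ∀ b : A, Dp b = (aeval x w * b - b * aeval x w) + Δ b := by
  have hwt : aeval x w * t - t * aeval x w = aeval x (p₁ * h) := by
    rw [mul_aeval_eq_aeval_mul_add_of_mul_eq hrel, hw]
    simp
  have hwx : aeval x w * x = x * aeval x w := by
    simpa using ((commute_X w).map (aeval x)).eq.symm
  have hDp := eq_of_leibniz_of_eqOn_of_adjoin_eq_top hDpleib
    (leibniz_mulLeft_sub_mulRight_add hΔleib (aeval x w)) hgen (by
      rintro y (rfl | rfl) <;>
        simp only [LinearMap.add_apply, LinearMap.sub_apply, LinearMap.mulLeft_apply,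
          LinearMap.mulRight_apply]
      · rw [hDpx, hΔx, hwx, sub_self, add_zero]
      · rw [hDpt, hΔt, hwt, hdiv, map_add])
  intro b
  simpa using LinearMap.congr_fun hDp b

/-- For `deg p ≥ deg h = N ≥ 1`, write `p = p₁·h + p₂` with `deg p₂ < N`.
Then the derivation `D_p` of `A_h` decomposes as `D_p = ad_w + Δ_{p₂}` for any
`w ∈ k[x]` with `w' = -p₁`. -/
theorem stmt18 (k : Type*) [Field k] [CharZero k] (h : k[X]) (N : ℕ) (hN : 1 ≤ N)
    (hdeg : h.natDegree = N)
    (A : Type*) [Ring A] [Algebra k A] (x t : A)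
    (hrel : t * x = x * t + aeval x h)
    (hgen : Algebra.adjoin k {x, t} = ⊤)
    (p p₁ p₂ : k[X]) (hp : N ≤ p.natDegree) (hdiv : p = p₁ * h + p₂)
    (hp₂ : p₂.degree < h.degree)
    (w : k[X]) (hw : derivative w = -p₁)
    (Dp Δ : A →ₗ[k] A)
    (hDpleib : ∀ a b : A, Dp (a * b) = a * Dp b + Dp a * b)
    (hΔleib : ∀ a b : A, Δ (a * b) = a * Δ b + Δ a * b)
    (hDpx : Dp x = 0) (hDpt : Dp t = aeval x p)
    (hΔx : Δ x = 0) (hΔt : Δ t = aeval x p₂) :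
    ∀ b : A, Dp b = (aeval x w * b - b * aeval x w) + Δ b :=
  stmt18_general k h A x t hrel hgen p p₁ p₂ hdiv w hw Dp Δ hDpleib hΔleib hDpx hDpt hΔx hΔt
end
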